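/- An element x of g(γ,Q) is locally finite (meaning that for every y∈g the span of {(ad x)^k y : k≥1} is finite dimensional) if and only if x∈ℂL_0; that is, the set of locally finite elements of g(γ,Q) is exactly ℂL_0. -/

import Mathlib

open scoped BigOperators

namespace QTorus

/-- σ(m,n) = ∏_{i<j} q_{ji}^{m_j n_i}. -/
noncomputable def qsigma (d : ℕ) (Q : Matrix (Fin d) (Fin d) ℂ) (m n : Fin d → ℤ) : ℂ :=
  ∏ i : Fin d, ∏ j : Fin d, if i < j then Q j i ^ (m j * n i) else 1

/-- The radical subgroup R = {m | σ(m,n)=σ(n,m) for all n}. -/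
def Rset (d : ℕ) (Q : Matrix (Fin d) (Fin d) ℂ) : Set (Fin d → ℤ) :=
  {m | ∀ n : Fin d → ℤ, qsigma d Q m n = qsigma d Q n m}

/-- (γ|m) = ∑ γ_i m_i. -/
noncomputable def ip (d : ℕ) (γ : Fin d → ℂ) (m : Fin d → ℤ) : ℂ :=
  ∑ i : Fin d, γ i * (m i : ℂ)

/-- The underlying vector space of g(γ,Q): formal ℂ-linear combinations of basis
vectors indexed by ℤ^d. -/
abbrev g (d : ℕ) := (Fin d → ℤ) →₀ ℂ

/-- The basis vector L_m. -/
noncomputable def L (d : ℕ) (m : Fin d → ℤ) : g d := Finsupp.single m 1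

/-- Hypotheses on the matrix Q: nonzero entries, q_{ii}=1, q_{ij}q_{ji}=1. -/
def QOk (d : ℕ) (Q : Matrix (Fin d) (Fin d) ℂ) : Prop :=
  (∀ i, Q i i = 1) ∧ (∀ i j, Q i j * Q j i = 1) ∧ (∀ i j, Q i j ≠ 0)

/-- γ is generic: γ_1,…,γ_d are linearly independent over ℚ. -/
def Generic (d : ℕ) (γ : Fin d → ℂ) : Prop := LinearIndependent ℚ γ

open Classical in
/-- Structure constants of g(γ,Q): [L_m, L_n] = sc(m,n) • L_{m+n}. -/
noncomputable def sc (d : ℕ) (Q : Matrix (Fin d) (Fin d) ℂ) (γ : Fin d → ℂ)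
    (m n : Fin d → ℤ) : ℂ :=
  if m ∈ Rset d Q then
    (if n ∈ Rset d Q then qsigma d Q m n * ip d γ (n - m)
     else qsigma d Q m n * ip d γ n)
  else
    (if n ∈ Rset d Q then -(qsigma d Q n m * ip d γ m)
     else qsigma d Q m n - qsigma d Q n m)

/-- The bracket of g(γ,Q), as the bilinear extension of
[L_m, L_n] = sc(m,n) • L_{m+n}. -/
noncomputable def br (d : ℕ) (Q : Matrix (Fin d) (Fin d) ℂ) (γ : Fin d → ℂ)
    (x y : g d) : g d :=
  x.sum fun m a => y.sum fun n b => Finsupp.single (m + n) (a * b * sc d Q γ m n)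

/-- A Lie algebra automorphism of g(γ,Q): a linear equivalence preserving the bracket. -/
def IsAut (d : ℕ) (Q : Matrix (Fin d) (Fin d) ℂ) (γ : Fin d → ℂ)
    (θ : g d ≃ₗ[ℂ] g d) : Prop :=
  ∀ x y : g d, θ (br d Q γ x y) = br d Q γ (θ x) (θ y)

/-- A derivation of g(γ,Q). -/
def IsDer (d : ℕ) (Q : Matrix (Fin d) (Fin d) ℂ) (γ : Fin d → ℂ)
    (D : g d →ₗ[ℂ] g d) : Prop :=
  ∀ x y : g d, D (br d Q γ x y) = br d Q γ (D x) y + br d Q γ x (D y)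

open Classical in
/-- δ(n,R) = 1 if n ∈ R, 0 otherwise. -/
noncomputable def deltaR (d : ℕ) (Q : Matrix (Fin d) (Fin d) ℂ) (n : Fin d → ℤ) : ℕ :=
  if n ∈ Rset d Q then 1 else 0

/-- A 2-cocycle on g(γ,Q). -/
def IsCocycle (d : ℕ) (Q : Matrix (Fin d) (Fin d) ℂ) (γ : Fin d → ℂ)
    (α : g d →ₗ[ℂ] g d →ₗ[ℂ] ℂ) : Prop :=
  (∀ x y : g d, α x y = - α y x) ∧
  (∀ x y z : g d,
    α (br d Q γ x y) z + α (br d Q γ z x) y + α (br d Q γ y z) x = 0)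

/-- i ↔ j is one of the exceptional index pairs (2l-1,2l) (1-based) of the rational
normal form. Here indices are 0-based. -/
def OffDiagPair (z : ℕ) (i j : ℕ) : Prop :=
  ∃ l : ℕ, l < z ∧ ((i = 2 * l ∧ j = 2 * l + 1) ∨ (i = 2 * l + 1 ∧ j = 2 * l))

/-- Q is in rational normal form with parameters z and k_1,…,k_d (0-based indexing:
the paper's pair (2i-1,2i) is the Lean pair (2l, 2l+1) with l = i-1). -/
def IsRNF (d : ℕ) (Q : Matrix (Fin d) (Fin d) ℂ) (z : ℕ) (k : Fin d → ℕ) : Prop :=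
  0 < z ∧ 2 * z ≤ d ∧
  (∀ i j : Fin d, ¬ OffDiagPair z i.val j.val → Q i j = 1) ∧
  (∀ (l : ℕ) (_ : l < z) (hi : 2 * l < d) (hj : 2 * l + 1 < d),
      IsPrimitiveRoot (Q ⟨2 * l, hi⟩ ⟨2 * l + 1, hj⟩) (k ⟨2 * l, hi⟩) ∧
      Q ⟨2 * l + 1, hj⟩ ⟨2 * l, hi⟩ = (Q ⟨2 * l, hi⟩ ⟨2 * l + 1, hj⟩)⁻¹ ∧
      k ⟨2 * l + 1, hj⟩ = k ⟨2 * l, hi⟩ ∧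
      1 < k ⟨2 * l, hi⟩) ∧
  (∀ (i : ℕ) (_ : i + 1 < 2 * z) (h1 : i < d) (h2 : i + 1 < d),
      k ⟨i + 1, h2⟩ ∣ k ⟨i, h1⟩) ∧
  (∀ i : Fin d, 2 * z ≤ i.val → k i = 1)

/-- The vector k_1 e_1 ∈ ℤ^d. -/
noncomputable def k1e1 (d : ℕ) (k : Fin d → ℕ) (hd : 0 < d) : Fin d → ℤ :=
  Pi.single ⟨0, hd⟩ (k ⟨0, hd⟩ : ℤ)

/-- A 2-cocycle is normalized if α(L_{m-k₁e₁}, L_{k₁e₁})=0 for m ∈ R, m ≠ 2k₁e₁,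
α(L_0, L_{2k₁e₁})=0, α(L_0, L_s)=0 for s ∉ R, and α(L_m,L_n)=0 whenever m+n ≠ 0. -/
def IsNormalized (d : ℕ) (Q : Matrix (Fin d) (Fin d) ℂ) (k : Fin d → ℕ) (hd : 0 < d)
    (α : g d →ₗ[ℂ] g d →ₗ[ℂ] ℂ) : Prop :=
  (∀ m ∈ Rset d Q, m ≠ 2 • k1e1 d k hd →
      α (L d (m - k1e1 d k hd)) (L d (k1e1 d k hd)) = 0) ∧
  α (L d 0) (L d (2 • k1e1 d k hd)) = 0 ∧
  (∀ s, s ∉ Rset d Q → α (L d 0) (L d s) = 0) ∧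
  (∀ m n : Fin d → ℤ, m + n ≠ 0 → α (L d m) (L d n) = 0)

/-- The degree derivation ∂_i, acting by ∂_i(L_m) = m_i L_m. -/
noncomputable def deg (d : ℕ) (i : Fin d) (y : g d) : g d :=
  y.sum fun m a => Finsupp.single m ((m i : ℂ) * a)

open Classical in
/-- The 2-cocycle α₁: α₁(L_m,L_n) = δ_{m+n,0}((m_γ)³-m_γ)/12 for m ∈ R, 0 otherwise,
where m_γ = (γ|m)/(γ|k₁e₁). -/
noncomputable def alpha1 (d : ℕ) (Q : Matrix (Fin d) (Fin d) ℂ) (γ : Fin d → ℂ)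
    (k : Fin d → ℕ) (hd : 0 < d) (x y : g d) : ℂ :=
  x.sum fun m a => y.sum fun n b => a * b *
    (if m ∈ Rset d Q ∧ m + n = 0 then
       ((ip d γ m / ip d γ (k1e1 d k hd)) ^ 3 - ip d γ m / ip d γ (k1e1 d k hd)) / 12
     else 0)

open Classical in
/-- The 2-cocycle α₂: α₂(L_r,L_s) = δ_{r+s,0} σ(r,-r)(γ|r)/(γ|k₁e₁) for r ∉ R,
0 otherwise. -/
noncomputable def alpha2 (d : ℕ) (Q : Matrix (Fin d) (Fin d) ℂ) (γ : Fin d → ℂ)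
    (k : Fin d → ℕ) (hd : 0 < d) (x y : g d) : ℂ :=
  x.sum fun m a => y.sum fun n b => a * b *
    (if m ∉ Rset d Q ∧ m + n = 0 then
       qsigma d Q m (-m) * (ip d γ m / ip d γ (k1e1 d k hd))
     else 0)

end QTorus

open QTorus

/-!
If `x` has a component `L_m` with `m ≠ 0`, order `ℤ^d` lexicographically, reversing the order if
necessary, so that the leading exponent `m` of `x` is positive. For a suitable `n` every bracket
`[L_m, L_{n + k m}]` is nonzero, so `(ad x)^k L_n` has leading exponent `n + k m`; these exponents
are pairwise distinct, so the iterates do not lie in a finite-dimensional space. Conversely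
`ad (c L_0)` preserves the support of every element.
-/

theorem Finsupp.finiteDimensional_span_iff_finite_biUnion_support {α K : Type*} [Field K]
    (A : Set (α →₀ K)) :
    FiniteDimensional K (Submodule.span K A) ↔ (⋃ v ∈ A, (v.support : Set α)).Finite := by
  have span_le_supported {B : Set (α →₀ K)} :
      Submodule.span K B ≤ Finsupp.supported K K (⋃ v ∈ B, (v.support : Set α)) :=
    Submodule.span_le.2 fun v hv => (Finsupp.mem_supported K v).2 <|
      Set.subset_biUnion_of_mem (u := fun v : α →₀ K => (v.support : Set α)) hv
  constructor
  · intro h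
    obtain ⟨t, ht⟩ := (Submodule.fg_iff_finiteDimensional _).2 h
    refine (t.finite_toSet.biUnion fun v _ => v.support.finite_toSet).subset ?_
    refine Set.iUnion₂_subset fun v hv => (Finsupp.mem_supported K v).1 ?_
    exact span_le_supported (ht ▸ Submodule.subset_span hv)
  · intro h
    have := h.to_subtype
    have := Module.Finite.equiv (Finsupp.supportedEquivFinsupp (M := K) (R := K)
      (⋃ v ∈ A, (v.support : Set α))).symm
    exact Submodule.finiteDimensional_of_le span_le_supported

namespace QTorus

open scoped Pointwise

variable {d : ℕ} {Q : Matrix (Fin d) (Fin d) ℂ} {γ : Fin d → ℂ}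

lemma qsigma_ne_zero (hQ : ∀ i j, Q i j ≠ 0) (m n : Fin d → ℤ) : qsigma d Q m n ≠ 0 :=
  Finset.prod_ne_zero_iff.2 fun i _ => Finset.prod_ne_zero_iff.2 fun j _ => by
    split_ifs
    exacts [zpow_ne_zero _ (hQ j i), one_ne_zero]

lemma qsigma_add_left (hQ : ∀ i j, Q i j ≠ 0) (m m' n : Fin d → ℤ) :
    qsigma d Q (m + m') n = qsigma d Q m n * qsigma d Q m' n := by
  simp only [qsigma, ← Finset.prod_mul_distrib]
  refine Finset.prod_congr rfl fun i _ => Finset.prod_congr rfl fun j _ => ?_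
  split_ifs
  · rw [Pi.add_apply, add_mul, zpow_add₀ (hQ j i)]
  · rw [one_mul]

lemma qsigma_add_right (hQ : ∀ i j, Q i j ≠ 0) (m n n' : Fin d → ℤ) :
    qsigma d Q m (n + n') = qsigma d Q m n * qsigma d Q m n' := by
  simp only [qsigma, ← Finset.prod_mul_distrib]
  refine Finset.prod_congr rfl fun i _ => Finset.prod_congr rfl fun j _ => ?_
  split_ifs
  · rw [Pi.add_apply, mul_add, zpow_add₀ (hQ j i)]
  · rw [one_mul]

lemma qsigma_nsmul_left (hQ : ∀ i j, Q i j ≠ 0) (m n : Fin d → ℤ) :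
    ∀ k : ℕ, qsigma d Q (k • m) n = qsigma d Q m n ^ k
  | 0 => by simp [qsigma]
  | k + 1 => by rw [succ_nsmul, qsigma_add_left hQ, qsigma_nsmul_left hQ m n k, pow_succ]

lemma qsigma_nsmul_right (hQ : ∀ i j, Q i j ≠ 0) (m n : Fin d → ℤ) :
    ∀ k : ℕ, qsigma d Q m (k • n) = qsigma d Q m n ^ k
  | 0 => by simp [qsigma]
  | k + 1 => by rw [succ_nsmul, qsigma_add_right hQ, qsigma_nsmul_right hQ m n k, pow_succ]

lemma nsmul_mem_Rset (hQ : ∀ i j, Q i j ≠ 0) {m : Fin d → ℤ} (hm : m ∈ Rset d Q) (k : ℕ) :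
    k • m ∈ Rset d Q := fun n => by
  rw [qsigma_nsmul_left hQ, qsigma_nsmul_right hQ, hm n]

lemma ip_ne_zero (hγ : Generic d γ) {m : Fin d → ℤ} (hm : m ≠ 0) : ip d γ m ≠ 0 := by
  intro h
  refine hm (funext (Fintype.linearIndependent_iff.1 (hγ.restrict_scalars' ℤ) m ?_))
  simpa [ip, zsmul_eq_mul, mul_comm] using h

lemma ip_nsmul (m : Fin d → ℤ) (k : ℕ) : ip d γ (k • m) = k * ip d γ m := by
  simp [ip, Finset.mul_sum, mul_left_comm]

/-- For `m ∈ R` take `n = 2m`; for `m ∉ R` take `n` with `σ(m,n) ≠ σ(n,m)`, an inequality that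
persists along the ray `n + ℕ m`. -/
lemma exists_sc_add_nsmul_ne_zero (hQ : ∀ i j, Q i j ≠ 0) (hγ : Generic d γ) {m : Fin d → ℤ}
    (hm : m ≠ 0) : ∃ n : Fin d → ℤ, ∀ k : ℕ, sc d Q γ m (n + k • m) ≠ 0 := by
  by_cases hmR : m ∈ Rset d Q
  · refine ⟨2 • m, fun k => ?_⟩
    have hray : 2 • m + k • m = (k + 2) • m := by rw [add_comm, add_nsmul]
    have hdiff : (k + 2) • m - m = (k + 1) • m := by rw [add_nsmul, add_nsmul, one_nsmul]; abel
    rw [hray, sc, if_pos hmR, if_pos (nsmul_mem_Rset hQ hmR _), hdiff, ip_nsmul]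
    exact mul_ne_zero (qsigma_ne_zero hQ _ _) (mul_ne_zero (by norm_cast) (ip_ne_zero hγ hm))
  · obtain ⟨n, hn⟩ : ∃ n, qsigma d Q m n ≠ qsigma d Q n m := by simpa [Rset] using hmR
    refine ⟨n, fun k => ?_⟩
    have hne : qsigma d Q m (n + k • m) ≠ qsigma d Q (n + k • m) m := by
      rw [qsigma_add_right hQ, qsigma_add_left hQ, qsigma_nsmul_right hQ, qsigma_nsmul_left hQ]
      exact fun h => hn (mul_right_cancel₀ (pow_ne_zero _ (qsigma_ne_zero hQ m m)) h)
    rw [sc, if_neg hmR, if_neg fun h => hne (h m).symm]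
    exact sub_ne_zero.2 hne

lemma br_apply (x w : g d) (p : Fin d → ℤ) :
    br d Q γ x w p = ∑ m ∈ x.support, ∑ q ∈ w.support,
      if m + q = p then x m * w q * sc d Q γ m q else 0 := by
  simp only [br, Finsupp.sum, Finsupp.finsetSum_apply, Finsupp.single_apply]

lemma support_br_subset (x w : g d) : (br d Q γ x w).support ⊆ x.support + w.support := by
  intro p hp
  by_contra hp'
  refine Finsupp.mem_support_iff.1 hp ?_
  rw [br_apply]
  refine Finset.sum_eq_zero fun m hm => Finset.sum_eq_zero fun q hq => if_neg ?_
  rintro rfl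
  exact hp' (Finset.add_mem_add hm hq)

section Leading

variable {G : Type*} [AddCommGroup G] [LinearOrder G] (φ : (Fin d → ℤ) →+ G)

def IsLeading (v : g d) (p : Fin d → ℤ) : Prop :=
  v p ≠ 0 ∧ ∀ q ∈ v.support, q ≠ p → φ q < φ p

variable {φ}

lemma IsLeading.le {v : g d} {p q : Fin d → ℤ} (hv : IsLeading φ v p) (hq : q ∈ v.support) :
    φ q ≤ φ p := by
  rcases eq_or_ne q p with rfl | hqp
  · exact le_rfl
  · exact (hv.2 q hq hqp).le

lemma exists_isLeading (hφ : Function.Injective φ) {x : g d} (hx : x.support.Nonempty) :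
    ∃ m, IsLeading φ x m := by
  obtain ⟨m, hm, hmax⟩ := x.support.exists_max_image φ hx
  exact ⟨m, Finsupp.mem_support_iff.1 hm, fun q hq hqm =>
    (hmax q hq).lt_of_ne fun h => hqm (hφ h)⟩

variable [IsOrderedAddMonoid G]

lemma IsLeading.eq_of_le_add {x w : g d} {m p a b : Fin d → ℤ} (hx : IsLeading φ x m)
    (hw : IsLeading φ w p) (ha : a ∈ x.support) (hb : b ∈ w.support)
    (hab : φ (m + p) ≤ φ (a + b)) : a = m ∧ b = p := by
  rw [map_add, map_add] at hab
  constructor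
  · by_contra ham
    exact (add_lt_add_of_lt_of_le (hx.2 a ha ham) (hw.le hb)).not_ge hab
  · by_contra hbp
    exact (add_lt_add_of_le_of_lt (hx.le ha) (hw.2 b hb hbp)).not_ge hab

lemma IsLeading.br_apply {x w : g d} {m p : Fin d → ℤ} (hx : IsLeading φ x m)
    (hw : IsLeading φ w p) : br d Q γ x w (m + p) = x m * w p * sc d Q γ m p := by
  have key {a b} (ha : a ∈ x.support) (hb : b ∈ w.support) (h : a + b = m + p) :=
    hx.eq_of_le_add hw ha hb (h ▸ le_rfl)
  rw [QTorus.br_apply, Finset.sum_eq_single_of_mem m (Finsupp.mem_support_iff.2 hx.1),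
    Finset.sum_eq_single_of_mem p (Finsupp.mem_support_iff.2 hw.1), if_pos rfl]
  · exact fun b hb hbp => if_neg fun h => hbp (key (Finsupp.mem_support_iff.2 hx.1) hb h).2
  · exact fun a ha ham => Finset.sum_eq_zero fun b hb => if_neg fun h => ham (key ha hb h).1

lemma IsLeading.br {x w : g d} {m p : Fin d → ℤ} (hx : IsLeading φ x m) (hw : IsLeading φ w p)
    (hsc : sc d Q γ m p ≠ 0) : IsLeading φ (br d Q γ x w) (m + p) := by
  refine ⟨by rw [hx.br_apply hw]; exact mul_ne_zero (mul_ne_zero hx.1 hw.1) hsc, ?_⟩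
  intro r hr hne
  obtain ⟨a, ha, b, hb, rfl⟩ := Finset.mem_add.1 (support_br_subset x w hr)
  by_contra hlt
  obtain ⟨rfl, rfl⟩ := hx.eq_of_le_add hw ha hb (not_lt.1 hlt)
  exact hne rfl

lemma isLeading_iterate_br {x : g d} {m n : Fin d → ℤ} (hx : IsLeading φ x m)
    (hsc : ∀ k : ℕ, sc d Q γ m (n + k • m) ≠ 0) :
    ∀ k : ℕ, IsLeading φ ((br d Q γ x)^[k] (L d n)) (n + k • m)
  | 0 => by
    refine ⟨by simp [L], fun q hq hqn => absurd ?_ hqn⟩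
    simpa [L, Finsupp.single_apply] using hq
  | k + 1 => by
    rw [Function.iterate_succ_apply', succ_nsmul, ← add_assoc, add_comm]
    exact hx.br (isLeading_iterate_br hx hsc k) (hsc k)

lemma exists_isLeading_pos (hφ : Function.Injective φ) {x : g d} {m₀ : Fin d → ℤ}
    (hm₀ : m₀ ∈ x.support) (hne : m₀ ≠ 0) :
    ∃ (ψ : (Fin d → ℤ) →+ G) (m : Fin d → ℤ), IsLeading ψ x m ∧ 0 < ψ m := by
  obtain ⟨ψ, hψ, hpos⟩ : ∃ ψ : (Fin d → ℤ) →+ G, Function.Injective ψ ∧ 0 < ψ m₀ := by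
    rcases (map_ne_zero_iff φ hφ |>.2 hne).lt_or_gt with hneg | hpos
    · exact ⟨-φ, neg_injective.comp hφ, by simpa using hneg⟩
    · exact ⟨φ, hφ, hpos⟩
  obtain ⟨m, hm⟩ := exists_isLeading hψ ⟨m₀, hm₀⟩
  exact ⟨ψ, m, hm, hpos.trans_le (hm.le hm₀)⟩

lemma not_finiteDimensional_span_iterate_br (hQ : ∀ i j, Q i j ≠ 0) (hγ : Generic d γ)
    {x : g d} {m : Fin d → ℤ} (hx : IsLeading φ x m) (hm : 0 < φ m) :
    ∃ y : g d, ¬ FiniteDimensional ℂ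
      (Submodule.span ℂ {v : g d | ∃ k : ℕ, 1 ≤ k ∧ (br d Q γ x)^[k] y = v}) := by
  obtain ⟨n, hn⟩ := exists_sc_add_nsmul_ne_zero hQ hγ (m := m) (by rintro rfl; simp at hm)
  refine ⟨L d n, fun hfin => ?_⟩
  rw [Finsupp.finiteDimensional_span_iff_finite_biUnion_support] at hfin
  have hmono : StrictMono fun k : ℕ => φ (n + (k + 1) • m) := fun a b hab => by
    simp only [map_add, map_nsmul]
    exact add_lt_add_right (nsmul_lt_nsmul_left hm (Nat.succ_lt_succ hab)) _
  refine Set.infinite_range_of_injective hmono.injective.of_comp (hfin.subset ?_)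
  rintro _ ⟨k, rfl⟩
  exact Set.mem_biUnion (x := (br d Q γ x)^[k + 1] (L d n)) ⟨k + 1, by omega, rfl⟩
    (Finsupp.mem_support_iff.2 (isLeading_iterate_br hx hn (k + 1)).1)

end Leading

lemma support_iterate_br_smul_L_zero_subset (c : ℂ) (y : g d) :
    ∀ k : ℕ, ((br d Q γ (c • L d 0))^[k] y).support ⊆ y.support
  | 0 => subset_rfl
  | k + 1 => by
    rw [Function.iterate_succ_apply']
    intro p hp
    obtain ⟨a, ha, b, hb, rfl⟩ := Finset.mem_add.1 (support_br_subset _ _ hp)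
    obtain rfl : a = 0 :=
      Finset.mem_singleton.1 (Finsupp.support_single_subset (Finsupp.support_smul ha))
    rw [zero_add]
    exact support_iterate_br_smul_L_zero_subset c y k hb

end QTorus

theorem stmt3_general (d : ℕ) (Q : Matrix (Fin d) (Fin d) ℂ) (hQ : QOk d Q)
    (γ : Fin d → ℂ) (hγ : Generic d γ) (x : g d) :
    (∀ y : g d, FiniteDimensional ℂ
        (Submodule.span ℂ {v : g d | ∃ k : ℕ, 1 ≤ k ∧ (fun w => br d Q γ x w)^[k] y = v}))
    ↔ ∃ c : ℂ, x = c • L d 0 := by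
  constructor
  · intro hfin
    by_contra hx
    obtain ⟨m₀, hm₀, hne⟩ : ∃ m₀ ∈ x.support, m₀ ≠ 0 := by
      by_contra! h
      refine hx ⟨x 0, ?_⟩
      rw [L, Finsupp.smul_single_one]
      exact Finsupp.eq_single_iff.2 ⟨fun m hm => Finset.mem_singleton.2 (h m hm), rfl⟩
    obtain ⟨ψ, m, hm, hpos⟩ := exists_isLeading_pos
      (φ := (toLexAddEquiv (Fin d → ℤ)).toAddMonoidHom) (toLexAddEquiv _).injective hm₀ hne
    obtain ⟨y, hy⟩ := not_finiteDimensional_span_iterate_br hQ.2.2 hγ hm hpos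
    exact hy (hfin y)
  · rintro ⟨c, rfl⟩ y
    rw [Finsupp.finiteDimensional_span_iff_finite_biUnion_support]
    refine y.support.finite_toSet.subset (Set.iUnion₂_subset ?_)
    rintro _ ⟨k, -, rfl⟩
    exact_mod_cast support_iterate_br_smul_L_zero_subset c y k

/-- x ∈ g(γ,Q) is locally finite (for every y the span of
{(ad x)^k y : k ≥ 1} is finite dimensional) iff x ∈ ℂL_0. -/
theorem stmt3 (d : ℕ) (hd : 1 < d) (Q : Matrix (Fin d) (Fin d) ℂ) (hQ : QOk d Q)
    (γ : Fin d → ℂ) (hγ : Generic d γ) (x : g d) :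
    (∀ y : g d, FiniteDimensional ℂ
        (Submodule.span ℂ {v : g d | ∃ k : ℕ, 1 ≤ k ∧ (fun w => br d Q γ x w)^[k] y = v}))
    ↔ ∃ c : ℂ, x = c • L d 0 :=
  stmt3_general d Q hQ γ hγ x
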